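/- Let k be a field with a family of non-archimedean absolute values {|·|_v} satisfying the product formula ∏_v |α|_v^{N_v} = 1 for all α ∈ k^×, and suppose the constant field k_0 = {α ∈ k : |α|_v ≤ 1 for all v} satisfies: if α ∈ k_0 is nonzero then |α|_v = 1 for all v. Assume every residue field k_v has characteristic zero (so |d|_v = 1 for the integer d ≥ 2). Let c ∈ k with c ∉ k_0, and suppose α, β ∈ k are such that conjugation by z ↦ αz + β sends z^d + c to a polynomial with all coefficients in k_0. Then a contradiction follows; i.e., z^d + c is not trivial over k. -/

import Mathlib

open Polynomial

/-! Compare coefficients of the conjugate. Its leading coefficient `α ^ (d - 1)` is integral at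
every place, so `α` is a constant and has absolute value `1` everywhere; its linear coefficient
`d * β ^ (d - 1)` then makes `β` integral, as `|d|_v = 1`. At a place where `|c|_v > 1` the
ultrametric inequality gives `|c + (β ^ d - β)|_v = |c|_v > 1`, contradicting the integrality of
the constant coefficient `α⁻¹ * (c + (β ^ d - β))`. -/

theorem coeff_C_mul_X_add_C_pow {R : Type*} [CommSemiring R] (a b : R) (n m : ℕ) :
    ((C a * X + C b) ^ n).coeff m = a ^ m * b ^ (n - m) * n.choose m := by
  have hterm : ∀ i, (C a * X) ^ i * C b ^ (n - i) * (n.choose i : R[X]) =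
      C (a ^ i * b ^ (n - i) * n.choose i) * X ^ i := by
    intro i
    simp only [C_mul, C_pow, C_eq_natCast]
    ring
  simp only [add_pow, hterm, finsetSum_coeff, coeff_C_mul_X_pow, Finset.sum_ite_eq,
    Finset.mem_range]
  split_ifs with hm
  · rfl
  · rw [Nat.choose_eq_zero_of_lt (by omega), Nat.cast_zero, mul_zero]

section Conjugate

variable {k : Type*} [Field k] {α β c : k} {d : ℕ}

theorem coeff_conj_X_pow_add_C_leading (hα : α ≠ 0) (hd : d ≠ 0) :
    (C α⁻¹ * ((C α * X + C β) ^ d + C c - C β)).coeff d = α ^ (d - 1) := by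
  simp only [coeff_C_mul, coeff_sub, coeff_add, coeff_C_mul_X_add_C_pow, tsub_self, pow_zero,
    mul_one, Nat.choose_self, Nat.cast_one, coeff_C, hd, ↓reduceIte, add_zero, sub_zero]
  rw [← mul_pow_sub_one hd, inv_mul_cancel_left₀ hα]

theorem coeff_conj_X_pow_add_C_one (hα : α ≠ 0) :
    (C α⁻¹ * ((C α * X + C β) ^ d + C c - C β)).coeff 1 = d * β ^ (d - 1) := by
  simp only [coeff_C_mul, coeff_sub, coeff_add, coeff_C_mul_X_add_C_pow, pow_one,
    Nat.choose_one_right, coeff_C_succ, add_zero, sub_zero]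
  rw [mul_assoc, inv_mul_cancel_left₀ hα, mul_comm]

theorem coeff_conj_X_pow_add_C_zero :
    (C α⁻¹ * ((C α * X + C β) ^ d + C c - C β)).coeff 0 = α⁻¹ * (c + (β ^ d - β)) := by
  rw [coeff_C_mul]
  congr 1
  simp only [coeff_sub, coeff_add, coeff_C_mul_X_add_C_pow, pow_zero, tsub_zero, one_mul,
    Nat.choose_zero_right, Nat.cast_one, mul_one, coeff_C_zero]
  ring

end Conjugate

theorem stmt7_general {k : Type*} [Field k] {ι : Type*} (v : ι → AbsoluteValue k ℝ)
    (hna : ∀ i, ∀ x y : k, v i (x + y) ≤ max (v i x) (v i y))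
    (hconst : ∀ x : k, x ≠ 0 → (∀ i, v i x ≤ 1) → ∀ i, v i x = 1)
    (d : ℕ) (hd : 2 ≤ d) (hres : ∀ i, v i (d : k) = 1)
    (c : k) (hc : ¬ ∀ i, v i c ≤ 1)
    (α β : k) (hα : α ≠ 0)
    (hconj : ∀ m : ℕ, ∀ i,
      v i ((C α⁻¹ * ((C α * X + C β) ^ d + C c - C β)).coeff m) ≤ 1) :
    False := by
  have hd0 : d ≠ 0 := by omega
  have hd1 : d - 1 ≠ 0 := by omega
  obtain ⟨i, hci⟩ := not_forall.mp hc
  have hα1 : ∀ j, v j α = 1 := hconst α hα fun j => by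
    simpa only [coeff_conj_X_pow_add_C_leading hα hd0, map_pow,
      pow_le_one_iff_of_nonneg ((v j).nonneg _) hd1] using hconj d j
  have hβ : v i β ≤ 1 := by
    simpa only [coeff_conj_X_pow_add_C_one hα, map_mul, hres, one_mul, map_pow,
      pow_le_one_iff_of_nonneg ((v i).nonneg _) hd1] using hconj 1 i
  have hshift : v i (β ^ d - β) ≤ 1 := by
    rw [sub_eq_add_neg]
    refine (hna i _ _).trans (max_le ?_ ?_)
    · rw [map_pow]
      exact pow_le_one₀ ((v i).nonneg _) hβ
    · rwa [map_neg_eq_map]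
  have hc0 := hconj 0 i
  rw [coeff_conj_X_pow_add_C_zero, map_mul, map_inv₀, hα1, inv_one, one_mul,
    IsNonarchimedean.add_eq_left_of_lt (hna i) (hshift.trans_lt (not_le.mp hci))] at hc0
  exact hci hc0

/-- Let `k` be a field with a family `v i` of non-archimedean absolute values satisfying
the product formula, whose constant field `k₀ = {α | ∀ i, v i α ≤ 1}` has the property
that nonzero elements have all absolute values `1`, and with all residue characteristics
zero (`v i d = 1`).  If `c ∉ k₀` and conjugating `z^d + c` by `z ↦ αz + β` (with `α ≠ 0`)
yields a polynomial with all coefficients in `k₀`, then a contradiction follows: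
`z^d + c` is not trivial over `k`. -/
theorem stmt7 {k : Type*} [Field k] {ι : Type*} (v : ι → AbsoluteValue k ℝ) (N : ι → ℕ)
    (hN : ∀ i, 1 ≤ N i)
    (hna : ∀ i, ∀ x y : k, v i (x + y) ≤ max (v i x) (v i y))
    (hprod : ∀ α : k, α ≠ 0 →
      ({i | v i α ≠ 1}.Finite ∧ ∏ᶠ i, (v i α) ^ (N i) = 1))
    (hconst : ∀ x : k, x ≠ 0 → (∀ i, v i x ≤ 1) → ∀ i, v i x = 1)
    (d : ℕ) (hd : 2 ≤ d) (hres : ∀ i, v i (d : k) = 1)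
    (c : k) (hc : ¬ ∀ i, v i c ≤ 1)
    (α β : k) (hα : α ≠ 0)
    (hconj : ∀ m : ℕ, ∀ i,
      v i ((C α⁻¹ * ((C α * X + C β) ^ d + C c - C β)).coeff m) ≤ 1) :
    False :=
  stmt7_general v hna hconst d hd hres c hc α β hα hconj
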